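/- arXiv:2205.12903 — 2 statements merged into one kernel-verified Lean document; each statement's English description precedes it below -/
import Mathlib

section
/- For integers X ≥ W ≥ 0 and Y ≥ 1 with Y dividing X and X/Y ≥ 1: 1 − C(X − X/Y, W)/C(X, W) ≥ 1 − (1 − W/X)^{X/Y}, where C(a,b) denotes the binomial coefficient. -/
lemma key_choose (n w k : ℕ) (h : w + k ≤ n) :
    Nat.choose (n - k) w * n ^ k ≤ Nat.choose n w * (n - w) ^ k := by
  induction k with
  | zero => simp
  | succ k ih =>
    have h' : w + k ≤ n := by omega
    have ihk := ih h'
    have hnk : n - (k + 1) + 1 = n - k := by omega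
    have hid : Nat.choose (n - (k + 1)) w * (n - k) =
        Nat.choose (n - k) w * (n - k - w) := by
      have h2 := Nat.choose_mul_succ_eq (n - (k + 1)) w
      rw [hnk] at h2
      exact h2
    set A := Nat.choose (n - (k + 1)) w with hA
    set B := Nat.choose (n - k) w with hB
    set C := Nat.choose n w with hC
    have hpos : 0 < n - k := by omega
    have hmul : (n - k - w) * n ≤ (n - w) * (n - k) := by
      have hw : w ≤ n := by omega
      have hk : k ≤ n := by omega
      have hkw : k + w ≤ n := by omega
      zify [hw, hk, hkw, Nat.sub_sub]
      nlinarith [Nat.zero_le w, Nat.zero_le k]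
    have step : A * n ^ (k + 1) * (n - k) ≤ C * (n - w) ^ (k + 1) * (n - k) := by
      calc A * n ^ (k + 1) * (n - k) = (A * (n - k)) * n * n ^ k := by ring
        _ = (B * (n - k - w)) * n * n ^ k := by rw [hid]
        _ = ((n - k - w) * n) * (B * n ^ k) := by ring
        _ ≤ ((n - w) * (n - k)) * (C * (n - w) ^ k) :=
            Nat.mul_le_mul hmul ihk
        _ = C * (n - w) ^ (k + 1) * (n - k) := by ring
    exact Nat.le_of_mul_le_mul_right step hpos

theorem stmt_16 (X W Y : ℕ) (hY : 1 ≤ Y) (hdvd : Y ∣ X) (hXY : 1 ≤ X / Y)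
    (hW : W ≤ X - X / Y) :
    (1 : ℝ) - (Nat.choose (X - X / Y) W : ℝ) / (Nat.choose X W) ≥
      1 - (1 - (W : ℝ) / X) ^ (X / Y) := by
  set K := X / Y with hK
  have hKX : K ≤ X := Nat.div_le_self X Y
  have hX : 0 < X := by omega
  have hWX : W ≤ X := by omega
  have h : W + K ≤ X := by omega
  have hkey := key_choose X W K h
  have hXR : (0 : ℝ) < X := by exact_mod_cast hX
  have hCpos : (0 : ℝ) < Nat.choose X W := by
    exact_mod_cast Nat.choose_pos hWX
  have hcast : (1 : ℝ) - (W : ℝ) / X = ((X - W : ℕ) : ℝ) / X := by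
    push_cast [hWX]
    field_simp
  rw [hcast]
  have hgoal : (Nat.choose (X - K) W : ℝ) / (Nat.choose X W) ≤
      (((X - W : ℕ) : ℝ) / X) ^ K := by
    rw [div_pow, div_le_div_iff₀ hCpos (by positivity)]
    have := hkey
    have : ((Nat.choose (X - K) W * X ^ K : ℕ) : ℝ) ≤
        ((Nat.choose X W * (X - W) ^ K : ℕ) : ℝ) := by exact_mod_cast hkey
    push_cast at this
    linarith
  linarith
end

section
/- Let β ∈ ℝ and define on Z/(p^s)Z the distribution P(E = j) = exp(−β·wt_L(j))/Z(β). Then the map β ↦ E[wt_L(E)] = Σ_j wt_L(j)·P(E = j) is strictly decreasing in β (for p^s > 2), and hence for every target T in the open interval (0, max average weight) there is a unique real β with E[wt_L(E)] = T. -/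
/-!
For a real weight `w` on a finite set, the Gibbs mean `⟨w⟩_β = Σ w e^{-βw} / Σ e^{-βw}` is strictly
decreasing in `β` unless `w` is constant: for `β₁ < β₂`, the difference `⟨w⟩_{β₁} - ⟨w⟩_{β₂}` is,
up to the positive factor `2 Z(β₁) Z(β₂)`, the double sum
`Σ_{i,j} (w i - w j) (e^{-β₁ w i - β₂ w j} - e^{-β₁ w j - β₂ w i})`, whose terms are all `≥ 0`
because the two exponents differ by `(β₂ - β₁)(w i - w j)`.
As `β → +∞` (resp. `-∞`) the Gibbs distribution concentrates on the minimal (resp. maximal) weights,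
so by continuity and the intermediate value theorem every value strictly between the minimal and
maximal weight is attained, exactly once. For the Lee weight on `ℤ/p^sℤ` these are `0` and
`⌊p^s/2⌋`.
-/

open Finset Filter Topology Real

lemma two_mul_sum_mul_sum_sub_sum_mul_sum {ι R : Type*} [CommRing R] (s : Finset ι)
    (w a b : ι → R) :
    2 * ((∑ i ∈ s, w i * a i) * (∑ j ∈ s, b j) - (∑ i ∈ s, w i * b i) * (∑ j ∈ s, a j)) =
      ∑ i ∈ s, ∑ j ∈ s, (w i - w j) * (a i * b j - a j * b i) := by
  set g : ι → ι → R := fun i j => w i * a i * b j - w i * b i * a j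
  have hsymm (i j : ι) : (w i - w j) * (a i * b j - a j * b i) = g i j + g j i := by ring
  simp only [hsymm, sum_add_distrib, sum_comm (f := fun i j => g j i), sum_mul_sum,
    ← sum_sub_distrib]
  ring

lemma StrictMono.sub_mul_sub_pos {α : Type*} [Ring α] [LinearOrder α] [IsStrictOrderedRing α]
    {f : α → α} (hf : StrictMono f) {x y : α} (h : x ≠ y) :
    0 < (x - y) * (f x - f y) := by
  rcases h.lt_or_gt with h | h
  · exact mul_pos_of_neg_of_neg (sub_neg.2 h) (sub_neg.2 (hf h))
  · exact mul_pos (sub_pos.2 h) (sub_pos.2 (hf h))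

lemma tendsto_exp_neg_mul_atTop {x : ℝ} (hx : 0 ≤ x) :
    Tendsto (fun β => exp (-β * x)) atTop (𝓝 (if x = 0 then 1 else 0)) := by
  rcases hx.eq_or_lt with rfl | hx
  · simp
  · rw [if_neg hx.ne']
    exact tendsto_exp_atBot.comp (tendsto_neg_atTop_atBot.atBot_mul_const hx)

namespace Gibbs

variable {ι : Type*} (s : Finset ι) (w : ι → ℝ)

noncomputable def partitionFn (β : ℝ) : ℝ := ∑ i ∈ s, exp (-β * w i)

noncomputable def mean (β : ℝ) : ℝ := (∑ i ∈ s, w i * exp (-β * w i)) / partitionFn s w β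

variable {s}

lemma partitionFn_pos (hs : s.Nonempty) (β : ℝ) : 0 < partitionFn s w β :=
  sum_pos (fun _ _ => exp_pos _) hs

lemma continuous_mean (hs : s.Nonempty) : Continuous (mean s w) :=
  Continuous.div (continuous_finsetSum _ fun _ _ => by fun_prop)
    (continuous_finsetSum _ fun _ _ => by fun_prop) fun β => (partitionFn_pos w hs β).ne'

lemma mean_neg (β : ℝ) : mean s (-w) β = -mean s w (-β) := by
  simp only [mean, partitionFn, Pi.neg_apply, mul_neg, neg_mul, neg_neg, sum_neg_distrib, neg_div]

lemma mean_strictAnti {i₀ j₀ : ι} (hi₀ : i₀ ∈ s) (hj₀ : j₀ ∈ s) (hw : w i₀ ≠ w j₀) :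
    StrictAnti (mean s w) := by
  intro β₁ β₂ hβ
  set g : ℝ → ℝ := fun x => exp ((β₂ - β₁) * x)
  have hg : StrictMono g := exp_strictMono.comp (strictMono_mul_left_of_pos (sub_pos.2 hβ))
  set term : ι → ι → ℝ := fun i j =>
    (w i - w j) * (exp (-β₁ * w i) * exp (-β₂ * w j) - exp (-β₁ * w j) * exp (-β₂ * w i))
  have hterm (i j : ι) :
      term i j = exp (-β₂ * (w i + w j)) * ((w i - w j) * (g (w i) - g (w j))) := by
    have hfac (x y : ℝ) : exp (-β₁ * x) * exp (-β₂ * y) = exp (-β₂ * (x + y)) * g x := by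
      simp only [g, ← exp_add]; ring_nf
    simp only [term]
    rw [hfac, hfac, add_comm (w j)]
    ring
  have hterm_nonneg (i j : ι) : 0 ≤ term i j := by
    rcases eq_or_ne (w i) (w j) with h | h
    · simp [term, h]
    · rw [hterm]; exact (mul_pos (exp_pos _) (hg.sub_mul_sub_pos h)).le
  have hsum : 0 < ∑ i ∈ s, ∑ j ∈ s, term i j := by
    refine sum_pos' (fun i _ => sum_nonneg fun j _ => hterm_nonneg i j) ⟨i₀, hi₀, ?_⟩
    refine sum_pos' (fun j _ => hterm_nonneg i₀ j) ⟨j₀, hj₀, ?_⟩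
    rw [hterm]; exact mul_pos (exp_pos _) (hg.sub_mul_sub_pos hw)
  rw [mean, mean, div_lt_div_iff₀ (partitionFn_pos w ⟨i₀, hi₀⟩ _)
    (partitionFn_pos w ⟨i₀, hi₀⟩ _), partitionFn, partitionFn]
  have := two_mul_sum_mul_sum_sub_sum_mul_sum s w (fun i => exp (-β₁ * w i))
    (fun i => exp (-β₂ * w i))
  linarith

lemma mean_eq_shift (c β : ℝ) :
    mean s w β = (∑ i ∈ s, w i * exp (-β * (w i - c))) / ∑ i ∈ s, exp (-β * (w i - c)) := by
  have hshift (x : ℝ) : exp (-β * (x - c)) = exp (β * c) * exp (-β * x) := by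
    rw [← exp_add]; ring_nf
  simp only [hshift, mul_left_comm (w _), ← mul_sum]
  exact (mul_div_mul_left _ _ (exp_ne_zero _)).symm

lemma tendsto_mean_atTop {m : ℝ} (hm : IsLeast (w '' s) m) :
    Tendsto (mean s w) atTop (𝓝 m) := by
  obtain ⟨⟨i₀, hi₀, hwi₀⟩, hm_le⟩ := hm
  have hgap (i : ι) (hi : i ∈ s) : 0 ≤ w i - m := sub_nonneg.2 (hm_le ⟨i, hi, rfl⟩)
  set n : ℝ := ∑ i ∈ s, if w i - m = 0 then 1 else 0
  have hn : 0 < n := sum_pos' (fun _ _ => by positivity) ⟨i₀, hi₀, by simp [hwi₀]⟩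
  have hden : Tendsto (fun β => ∑ i ∈ s, exp (-β * (w i - m))) atTop (𝓝 n) :=
    tendsto_finsetSum _ fun i hi => tendsto_exp_neg_mul_atTop (hgap i hi)
  have hnum : Tendsto (fun β => ∑ i ∈ s, w i * exp (-β * (w i - m))) atTop (𝓝 (m * n)) := by
    have hconc (i : ι) :
        w i * (if w i - m = 0 then 1 else 0) = m * (if w i - m = 0 then 1 else 0) := by
      split_ifs with h <;> linarith
    rw [mul_sum, ← sum_congr rfl fun i _ => hconc i]
    exact tendsto_finsetSum _ fun i hi => (tendsto_exp_neg_mul_atTop (hgap i hi)).const_mul _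
  rw [funext (mean_eq_shift w m)]
  have := hnum.div hden hn.ne'
  rwa [mul_div_cancel_right₀ m hn.ne'] at this

lemma tendsto_mean_atBot {M : ℝ} (hM : IsGreatest (w '' s) M) :
    Tendsto (mean s w) atBot (𝓝 M) := by
  have hneg : IsLeast ((-w) '' s) (-M) := by
    obtain ⟨⟨i, hi, hwi⟩, hle⟩ := hM
    refine ⟨⟨i, hi, by simp [hwi]⟩, ?_⟩
    rintro _ ⟨j, hj, rfl⟩
    exact neg_le_neg (hle ⟨j, hj, rfl⟩)
  have := (tendsto_mean_atTop (-w) hneg).neg.comp tendsto_neg_atBot_atTop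
  simpa [Function.comp_def, mean_neg] using this

lemma existsUnique_mean_eq {m M T : ℝ} (hm : IsLeast (w '' s) m) (hM : IsGreatest (w '' s) M)
    (hT : T ∈ Set.Ioo m M) : ∃! β, mean s w β = T := by
  obtain ⟨i₀, hi₀, hwi₀⟩ := hm.1
  obtain ⟨j₀, hj₀, hwj₀⟩ := hM.1
  have hanti := mean_strictAnti w hi₀ hj₀ (by linarith [hT.1, hT.2])
  obtain ⟨β, hβ⟩ : T ∈ Set.range (mean s w) := by
    refine mem_range_of_exists_le_of_exists_ge (continuous_mean w ⟨i₀, hi₀⟩) ?_ ?_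
    · exact ((tendsto_mean_atTop w hm).eventually (gt_mem_nhds hT.1)).exists.imp fun _ => le_of_lt
    · exact ((tendsto_mean_atBot w hM).eventually (lt_mem_nhds hT.2)).exists.imp fun _ => le_of_lt
  exact ⟨β, hβ, fun γ hγ => hanti.injective (hγ.trans hβ.symm)⟩

end Gibbs

theorem stmt_19_general (p s : ℕ) (hq : 2 < p ^ s) :
    let q := p ^ s
    let w : ℕ → ℕ := fun j => min j (q - j)
    let avg : ℝ → ℝ := fun β =>
      (∑ j ∈ Finset.range q, (w j : ℝ) * Real.exp (-β * (w j : ℝ))) /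
        (∑ j ∈ Finset.range q, Real.exp (-β * (w j : ℝ)))
    StrictAnti avg ∧
      ∀ T : ℝ, 0 < T → T < ((q / 2 : ℕ) : ℝ) → ∃! β : ℝ, avg β = T := by
  intro q w avg
  have hq : 2 < q := hq
  set wt : ℕ → ℝ := fun j => (w j : ℝ)
  have havg : avg = Gibbs.mean (range q) wt := rfl
  have hmin : IsLeast (wt '' range q) 0 := by
    refine ⟨⟨0, by simp; omega, by simp [wt, w]⟩, ?_⟩
    rintro _ ⟨j, -, rfl⟩
    positivity
  have hmax : IsGreatest (wt '' range q) (q / 2 : ℕ) := by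
    refine ⟨⟨q / 2, by simp; omega, by simp only [wt, w]; congr 1; omega⟩, ?_⟩
    rintro _ ⟨j, -, rfl⟩
    simp only [wt, w, Nat.cast_le]
    omega
  have hw01 : w 0 ≠ w 1 := by simp only [w]; omega
  rw [havg]
  refine ⟨Gibbs.mean_strictAnti wt (i₀ := 0) (j₀ := 1) (by simp; omega) (by simp; omega)
    (Nat.cast_injective.ne hw01), fun T hT₀ hT => Gibbs.existsUnique_mean_eq wt hmin hmax ⟨hT₀, hT⟩⟩

theorem stmt_19 (p s : ℕ) (hp : p.Prime) (hs : 0 < s) (hq : 2 < p ^ s) :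
    let q := p ^ s
    let w : ℕ → ℕ := fun j => min j (q - j)
    let avg : ℝ → ℝ := fun β =>
      (∑ j ∈ Finset.range q, (w j : ℝ) * Real.exp (-β * (w j : ℝ))) /
        (∑ j ∈ Finset.range q, Real.exp (-β * (w j : ℝ)))
    StrictAnti avg ∧
      ∀ T : ℝ, 0 < T → T < ((q / 2 : ℕ) : ℝ) → ∃! β : ℝ, avg β = T :=
  stmt_19_general p s hq
end
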